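/- arXiv:1709.02146 — 7 statements merged into one kernel-verified Lean document; each statement's English description precedes it below -/
import Mathlib

section
/- Let R be a commutative ring whose injective dimension as a module over itself is at most n (i.e., R is Gorenstein of Gorenstein dimension at most n). Let A be an R-algebra which is finitely generated and projective as an R-module, and suppose A carries an R-bilinear form β : A × A → R that is symmetric (β(x,y) = β(y,x) for all x,y ∈ A), associative (β(x·y, z) = β(x, y·z) for all x,y,z ∈ A), and non-degenerate in the sense that the R-linear map A → Hom_R(A,R), x ↦ (y ↦ β(y,x)), is bijective. Suppose moreover that the unit map R → A admits an R-linear retraction. Then the injective dimension of A as a left module over itself is at most n; in particular, A is a Gorenstein ring. -/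
/-!
STATEMENT 0: Let `R` be a commutative ring of self-injective dimension at most
`n` and `A` an `R`-algebra, finitely generated projective as an `R`-module,
carrying a symmetric, associative, non-degenerate `R`-bilinear form and such
that the unit `R → A` admits an `R`-linear retraction.  Then `A` has injective
dimension at most `n` as a left module over itself (in particular `A` is
Gorenstein).

Injective dimension `≤ n` of a module `M` over a ring `S` is formalized by the
standard characterization: `Ext^i_S(N, M) = 0` for every `S`-module `N` and
every `i > n`.
-/

open CategoryTheory

universe u

instance moduleCatHasExt (S : Type u) [Ring S] : HasExt.{u + 1} (ModuleCat.{u} S) :=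
  letI := HasDerivedCategory.standard (ModuleCat.{u} S)
  hasExt_of_hasDerivedCategory _

/-- An `S`-module `M` has injective dimension at most `n` iff `Ext^i_S(N, M)`
vanishes for every `S`-module `N` and every `i > n`. -/
def injectiveDimensionLE (S : Type u) [Ring S] (M : Type u) [AddCommGroup M] [Module S M]
    (n : ℕ) : Prop :=
  ∀ (N : ModuleCat.{u} S) (i : ℕ), n < i →
    Subsingleton (Abelian.Ext N (ModuleCat.of S M) i)

/-!
The form identifies `A` with `Hom_R(A, R)`, the coextension of scalars of `R`, as left
`A`-modules: associativity is exactly the `A`-linearity of `x ↦ β(-, x)`. Since `A` is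
`R`-projective, coextension of scalars is exact, so the adjunction between restriction and
coextension passes to derived categories and gives `Ext^i_A(N, Hom_R(A, R)) ≃ Ext^i_R(N, R)`,
which vanishes for `i > n`.
-/

open Limits

namespace CategoryTheory

variable {C D : Type*} [Category C] [Category D]

def Adjunction.mapHomologicalComplex [Preadditive C] [Preadditive D]
    {F : C ⥤ D} {G : D ⥤ C} [F.Additive] [G.Additive] (adj : F ⊣ G)
    {ι : Type*} (c : ComplexShape ι) :
    F.mapHomologicalComplex c ⊣ G.mapHomologicalComplex c where
  unit :=
    { app := fun K =>
        { f := fun i => adj.unit.app (K.X i)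
          comm' := fun i j _ => (adj.unit.naturality (K.d i j)).symm }
      naturality := fun K L φ => by
        ext i
        exact adj.unit.naturality (φ.f i) }
  counit :=
    { app := fun K =>
        { f := fun i => adj.counit.app (K.X i)
          comm' := fun i j _ => (adj.counit.naturality (K.d i j)).symm }
      naturality := fun K L φ => by
        ext i
        exact adj.counit.naturality (φ.f i) }
  left_triangle_components K := by
    ext i
    exact adj.left_triangle_components (K.X i)
  right_triangle_components K := by
    ext i
    exact adj.right_triangle_components (K.X i)

lemma Functor.preservesFiniteColimits_of_preservesEpimorphisms [Abelian C] [Abelian D]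
    (F : C ⥤ D) [F.Additive] [PreservesFiniteLimits F] [F.PreservesEpimorphisms] :
    PreservesFiniteColimits F :=
  (F.preservesFiniteColimits_iff_forall_exact_map_and_epi).2 fun S hS =>
    ⟨(F.preservesFiniteLimits_iff_forall_exact_map_and_mono.1 ‹_› S hS).1,
      have := hS.epi_g; inferInstance⟩

namespace Adjunction

variable [Abelian C] [Abelian D] {F : C ⥤ D} {G : D ⥤ C} [F.Additive] [G.Additive]
  [PreservesFiniteLimits F] [PreservesFiniteColimits F]
  [PreservesFiniteLimits G] [PreservesFiniteColimits G]

noncomputable def mapDerivedCategory [HasDerivedCategory C] [HasDerivedCategory D]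
    (adj : F ⊣ G) : F.mapDerivedCategory ⊣ G.mapDerivedCategory :=
  letI : CatCommSq (F.mapHomologicalComplex (ComplexShape.up ℤ))
      DerivedCategory.Q DerivedCategory.Q F.mapDerivedCategory :=
    ⟨F.mapDerivedCategoryFactors.symm⟩
  letI : CatCommSq (G.mapHomologicalComplex (ComplexShape.up ℤ))
      DerivedCategory.Q DerivedCategory.Q G.mapDerivedCategory :=
    ⟨G.mapDerivedCategoryFactors.symm⟩
  (adj.mapHomologicalComplex (ComplexShape.up ℤ)).localization
    DerivedCategory.Q (HomologicalComplex.quasiIso _ _)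
    DerivedCategory.Q (HomologicalComplex.quasiIso _ _) _ _

noncomputable def extEquiv [HasExt.{w} C] [HasExt.{w} D] (adj : F ⊣ G) (X : C) (Y : D) (n : ℕ) :
    Abelian.Ext X (G.obj Y) n ≃ Abelian.Ext (F.obj X) Y n :=
  letI := HasDerivedCategory.standard C
  letI := HasDerivedCategory.standard D
  let sC := DerivedCategory.singleFunctor C 0
  let sD := DerivedCategory.singleFunctor D 0
  Abelian.Ext.homEquiv.trans <|
    (((shiftFunctor _ (n : ℤ)).mapIso
      ((G.mapDerivedCategorySingleFunctor 0).symm.app Y)).homToEquiv).trans <|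
    (((G.mapDerivedCategory.commShiftIso (n : ℤ)).app (sD.obj Y)).symm.homToEquiv).trans <|
    ((adj.mapDerivedCategory.homEquiv (sC.obj X) ((sD.obj Y)⟦(n : ℤ)⟧)).symm).trans <|
    (((F.mapDerivedCategorySingleFunctor 0).app X).homFromEquiv).trans
    (Abelian.Ext.homEquiv (X := F.obj X) (Y := Y) (n := n)).symm

end Adjunction

lemma Abelian.Ext.subsingleton_of_iso [Abelian C] [HasExt.{w} C] {X Y Y' : C} (e : Y ≅ Y') {n : ℕ}
    [Subsingleton (Abelian.Ext X Y' n)] : Subsingleton (Abelian.Ext X Y n) :=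
  ⟨fun a b => by
    have h := Subsingleton.elim (a.comp (mk₀ e.hom) (add_zero n)) (b.comp (mk₀ e.hom) (add_zero n))
    simpa using congrArg (·.comp (mk₀ e.inv) (add_zero n)) h⟩

end CategoryTheory

namespace ModuleCat

section RingHom

variable {R S : Type u} [Ring R] [Ring S] (f : R →+* S)

instance : (coextendScalars.{u, u, u} f).Additive where
  map_add := rfl

instance : PreservesFiniteLimits (restrictScalars.{u} f) :=
  ⟨fun _ _ _ => ⟨inferInstance⟩⟩

instance : PreservesFiniteColimits (restrictScalars.{u} f) :=
  ⟨fun _ _ _ => ⟨inferInstance⟩⟩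

instance : PreservesFiniteLimits (coextendScalars.{u, u, u} f) :=
  have := (restrictCoextendScalarsAdj.{u, u, u} f).rightAdjoint_preservesLimits
  PreservesLimitsOfSize.preservesFiniteLimits.{0, u, u} _

instance [Module.Projective R ((restrictScalars f).obj (of S S))] :
    (coextendScalars.{u, u, u} f).PreservesEpimorphisms where
  preserves {M M'} g hg := by
    rw [epi_iff_surjective] at hg ⊢
    exact fun h => Module.projective_lifting_property g.hom (CoextendScalars.equiv f M' h) hg

instance [Module.Projective R ((restrictScalars f).obj (of S S))] :
    PreservesFiniteColimits (coextendScalars.{u, u, u} f) :=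
  Functor.preservesFiniteColimits_of_preservesEpimorphisms _

end RingHom

section Algebra

variable (R A : Type u) [CommRing R] [Ring A] [Algebra R A]

def restrictScalarsSelfLinearEquiv :
    A ≃ₗ[R] (restrictScalars.{u} (algebraMap R A)).obj (of A A) where
  toFun x := x
  invFun x := x
  map_add' _ _ := rfl
  map_smul' c x := Algebra.smul_def c x
  left_inv _ := rfl
  right_inv _ := rfl

instance [Module.Projective R A] :
    Module.Projective R ((restrictScalars.{u} (algebraMap R A)).obj (of A A)) :=
  Module.Projective.of_equiv (restrictScalarsSelfLinearEquiv R A)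

variable {R A}

noncomputable def selfLinearEquivCoextendScalars (β : A →ₗ[R] A →ₗ[R] R)
    (hassoc : ∀ x y z : A, β (x * y) z = β x (y * z))
    (hnondeg : Function.Bijective fun x : A => β.flip x) :
    A ≃ₗ[A] (coextendScalars.{u, u, u} (algebraMap R A)).obj (of R R) :=
  let e := (restrictScalarsSelfLinearEquiv R A).arrowCongr (LinearEquiv.refl R R)
  let φ : A →ₗ[A] (coextendScalars.{u, u, u} (algebraMap R A)).obj (of R R) :=
    { toFun := fun x => (CoextendScalars.equiv _ _).symm (e (β.flip x))
      map_add' := fun x y => by simp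
      map_smul' := fun a x => by
        ext y
        exact (hassoc y a x).symm }
  LinearEquiv.ofBijective φ
    ((CoextendScalars.equiv _ _).symm.bijective.comp (e.bijective.comp hnondeg))

end Algebra

end ModuleCat

open ModuleCat

lemma injectiveDimensionLE.of_linearEquiv {S M M' : Type u} [Ring S] [AddCommGroup M] [Module S M]
    [AddCommGroup M'] [Module S M'] {n : ℕ} (hM : injectiveDimensionLE S M n) (e : M ≃ₗ[S] M') :
    injectiveDimensionLE S M' n := fun N i hi =>
  have := hM N i hi
  Abelian.Ext.subsingleton_of_iso e.symm.toModuleIso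

lemma injectiveDimensionLE_coextendScalars {R S : Type u} [Ring R] [Ring S] (f : R →+* S)
    [Module.Projective R ((restrictScalars f).obj (of S S))] {M : ModuleCat.{u} R} {n : ℕ}
    (hM : injectiveDimensionLE R M n) :
    injectiveDimensionLE S ((coextendScalars.{u, u, u} f).obj M) n := fun N i hi =>
  have := hM ((restrictScalars f).obj N) i hi
  ((restrictCoextendScalarsAdj.{u, u, u} f).extEquiv N M i).subsingleton

theorem gorenstein_of_symmetric_form_general
    {R A : Type u} [CommRing R] [Ring A] [Algebra R A] (n : ℕ)
    (hR : injectiveDimensionLE R R n)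
    [Module.Projective R A]
    (β : A →ₗ[R] A →ₗ[R] R)
    (hassoc : ∀ x y z : A, β (x * y) z = β x (y * z))
    (hnondeg : Function.Bijective fun x : A => β.flip x) :
    injectiveDimensionLE A A n :=
  (injectiveDimensionLE_coextendScalars (algebraMap R A) (M := of R R) hR).of_linearEquiv
    (selfLinearEquivCoextendScalars β hassoc hnondeg).symm

theorem gorenstein_of_symmetric_form
    {R A : Type u} [CommRing R] [Ring A] [Algebra R A] (n : ℕ)
    (hR : injectiveDimensionLE R R n)
    [Module.Finite R A] [Module.Projective R A]
    (β : A →ₗ[R] A →ₗ[R] R)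
    (hsymm : ∀ x y : A, β x y = β y x)
    (hassoc : ∀ x y z : A, β (x * y) z = β x (y * z))
    (hnondeg : Function.Bijective fun x : A => β.flip x)
    (r : A →ₗ[R] R) (hr : ∀ c : R, r (algebraMap R A c) = c) :
    injectiveDimensionLE A A n :=
  gorenstein_of_symmetric_form_general n hR β hassoc hnondeg
end

section
/- Let k be a field and A a finite-dimensional k-algebra equipped with a k-bilinear form β : A × A → k that is symmetric (β(x,y) = β(y,x)), associative (β(x·y, z) = β(x, y·z)), and non-degenerate (the k-linear map A → Hom_k(A,k), x ↦ (y ↦ β(y,x)), is bijective). Then A is self-injective, i.e., A is injective as a left module over itself. -/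
open LinearMap

theorem LinearMap.exists_forall_apply_eq_of_surjective_flip {k M N : Type*} [Field k]
    [AddCommGroup M] [Module k M] [AddCommGroup N] [Module k N]
    (β : M →ₗ[k] M →ₗ[k] k) (hβ : Function.Surjective β.flip)
    (i : N →ₗ[k] M) (hi : Function.Injective i) (φ : N →ₗ[k] k) :
    ∃ c : M, ∀ n, β (i n) c = φ n := by
  obtain ⟨r, hr⟩ := i.exists_leftInverse_of_injective (ker_eq_bot.2 hi)
  obtain ⟨c, hc⟩ := hβ (φ ∘ₗ r)
  refine ⟨c, fun n => ?_⟩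
  rw [← flip_apply (f := β), hc, comp_apply, ← comp_apply r, hr, id_apply]

/-- With `φ := β (g ·) 1` extended to all of `A` and represented as `β · c`, associativity of `β`
turns `β y (x * c) = β (g (y * x)) 1` into `β y (g x)`, so `g` is right multiplication by `c`. -/
theorem Module.baer_of_associative_nondegenerate_form {k A : Type*} [Field k] [Ring A]
    [Algebra k A] (β : A →ₗ[k] A →ₗ[k] k) (hassoc : ∀ x y z : A, β (x * y) z = β x (y * z))
    (hnondeg : Function.Bijective β.flip) : Module.Baer A A := by
  intro I g
  obtain ⟨c, hc⟩ := β.exists_forall_apply_eq_of_surjective_flip hnondeg.2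
    (I.subtype.restrictScalars k) I.injective_subtype (β.flip 1 ∘ₗ g.restrictScalars k)
  refine ⟨toSpanSingleton A A c, fun x hx => hnondeg.1 (LinearMap.ext fun y => ?_)⟩
  calc β y (x • c) = β (y * x) c := (hassoc y x c).symm
    _ = β (g (y • ⟨x, hx⟩)) 1 := hc (y • ⟨x, hx⟩)
    _ = β (y * g ⟨x, hx⟩) 1 := by rw [map_smul, smul_eq_mul]
    _ = β y (g ⟨x, hx⟩) := by rw [hassoc, mul_one]

theorem selfInjective_of_symmetric_frobenius_general
    {k A : Type} [Field k] [Ring A] [Algebra k A]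
    (β : A →ₗ[k] A →ₗ[k] k)
    (hassoc : ∀ x y z : A, β (x * y) z = β x (y * z))
    (hnondeg : Function.Bijective fun x : A => β.flip x) :
    Module.Injective A A :=
  (Module.baer_of_associative_nondegenerate_form β hassoc hnondeg).injective

theorem selfInjective_of_symmetric_frobenius
    {k A : Type} [Field k] [Ring A] [Algebra k A] [FiniteDimensional k A]
    (β : A →ₗ[k] A →ₗ[k] k)
    (hsymm : ∀ x y : A, β x y = β y x)
    (hassoc : ∀ x y z : A, β (x * y) z = β x (y * z))
    (hnondeg : Function.Bijective fun x : A => β.flip x) :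
    Module.Injective A A :=
  selfInjective_of_symmetric_frobenius_general β hassoc hnondeg
end

section
/- Let k be a field, A a finite-dimensional k-algebra that is self-injective (A is injective as a left A-module), and P a nonzero indecomposable projective left A-module that is finitely generated. Then the socle of P, i.e., the sum of all simple A-submodules of P, is a simple A-module. -/
/-!
Over a self-injective ring a finitely generated projective module is a direct summand of some
`Aⁿ`, hence injective. In an injective module, a submodule `C` maximal among those missing `b`
is a direct summand, so an indecomposable injective module is uniform: two nonzero submodules
always meet. An Artinian nonzero module has a simple submodule, and uniformity leaves room for
only one, which is therefore the whole socle.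
-/

theorem exists_le_maximal_disjoint {α : Type*} [CompleteLattice α] [IsCompactlyGenerated α]
    {a b : α} (hab : Disjoint a b) : ∃ c, a ≤ c ∧ Maximal (Disjoint · b) c :=
  zorn_le_nonempty₀ {c | Disjoint c b}
    (fun _ hs hchain _ _ ↦ ⟨_, hchain.directedOn.disjoint_sSup_left.mpr hs, fun _ ↦ le_sSup⟩)
    a hab

theorem isAtom_sSup_setOf_isAtom {α : Type*} [CompleteLattice α] [IsAtomic α] [Nontrivial α]
    (h : ∀ a b : α, Disjoint a b → a = ⊥ ∨ b = ⊥) : IsAtom (sSup {a : α | IsAtom a}) := by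
  obtain ⟨a, ha, -⟩ := (eq_bot_or_exists_atom_le (⊤ : α)).resolve_left top_ne_bot
  have hatoms : {a : α | IsAtom a} = {a} := by
    refine Set.eq_singleton_iff_unique_mem.mpr ⟨ha, fun b hb ↦ ?_⟩
    by_contra hne
    rcases h b a (hb.disjoint_of_ne ha hne) with h | h
    exacts [hb.1 h, ha.1 h]
  rwa [hatoms, sSup_singleton]

namespace Module.Injective

universe u v w

variable {R : Type u} {M : Type v} {N : Type w} [Ring R] [AddCommGroup M] [Module R M]
  [AddCommGroup N] [Module R N]

theorem of_retract [Small.{v} R] [Module.Injective R M] (r : M →ₗ[R] N) (s : N →ₗ[R] M)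
    (hrs : r ∘ₗ s = LinearMap.id) : Module.Injective R N := by
  refine Module.Baer.injective fun I g ↦ ?_
  obtain ⟨g', hg'⟩ := Module.Baer.of_injective ‹_› I (s ∘ₗ g)
  refine ⟨r ∘ₗ g', fun x hx ↦ ?_⟩
  rw [LinearMap.comp_apply, hg' x hx, LinearMap.comp_apply, ← LinearMap.comp_apply r s, hrs,
    LinearMap.id_apply]

theorem of_finite_of_projective [Module.Injective R R] [Module.Finite R N]
    [Module.Projective R N] : Module.Injective R N := by
  obtain ⟨n, f, hf⟩ := Module.Finite.exists_fin' R N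
  obtain ⟨s, hs⟩ := Module.projective_lifting_property f LinearMap.id hf
  exact of_retract f s hs

theorem exists_isCompl_of_maximal_disjoint [Small.{v} R] [Module.Injective R M]
    {b C : Submodule R M} (hC : Maximal (Disjoint · b) C) : ∃ D, b ≤ D ∧ IsCompl C D := by
  obtain ⟨D, hbD, hD⟩ := exists_le_maximal_disjoint hC.prop.symm
  have hi : Function.Injective (C.subtype.coprod D.subtype) := by
    rw [← LinearMap.ker_eq_bot, LinearMap.ker_coprod_of_disjoint_range] <;> simp [hD.prop.symm]
  -- `f` extends the projection `C ⊕ D → C`; maximality of `D` and then of `C` make it idempotent.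
  obtain ⟨f, hf⟩ := extension_property R M _ _ _ hi (C.subtype ∘ₗ LinearMap.fst R C D)
  have hfC : ∀ x ∈ C, f x = x := fun x hx ↦ by simpa using LinearMap.congr_fun hf (⟨x, hx⟩, 0)
  have hfD : ∀ x ∈ D, f x = 0 := fun x hx ↦ by simpa using LinearMap.congr_fun hf (0, ⟨x, hx⟩)
  have hcomap : b.comap f ≤ D := by
    refine hD.le_of_ge (Submodule.disjoint_def.mpr fun x hxb hxC ↦ ?_) fun x hx ↦ ?_
    · exact Submodule.disjoint_def.mp hC.prop x hxC (hfC x hxC ▸ hxb)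
    · simp [Submodule.mem_comap, hfD x hx]
  have hrange : LinearMap.range f = C := by
    refine hC.eq_of_ge (Submodule.disjoint_def.mpr ?_) fun x hx ↦ ⟨x, hfC x hx⟩
    rintro _ ⟨x, rfl⟩ hxb
    exact hfD x (hcomap hxb)
  refine ⟨D, hbD, hD.prop.symm, codisjoint_iff.mpr (eq_top_iff.mpr fun x _ ↦ ?_)⟩
  have hfx : f x ∈ C := hrange ▸ LinearMap.mem_range_self f x
  refine Submodule.mem_sup.mpr ⟨f x, hfx, x - f x, hcomap ?_, add_sub_cancel _ _⟩
  simp [Submodule.mem_comap, hfC _ hfx]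

theorem eq_bot_or_eq_bot_of_disjoint [Small.{v} R] [Module.Injective R M]
    (hM : ∀ p q : Submodule R M, IsCompl p q → p = ⊥ ∨ q = ⊥)
    {a b : Submodule R M} (hab : Disjoint a b) : a = ⊥ ∨ b = ⊥ := by
  obtain ⟨C, haC, hC⟩ := exists_le_maximal_disjoint hab
  obtain ⟨D, hbD, hCD⟩ := exists_isCompl_of_maximal_disjoint hC
  rcases hM C D hCD with rfl | rfl
  exacts [.inl (le_bot_iff.mp haC), .inr (le_bot_iff.mp hbD)]

end Module.Injective

theorem socle_simple_of_indecomposable_projective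
    {k A : Type} [Field k] [Ring A] [Algebra k A] [FiniteDimensional k A]
    (hA : Module.Injective A A)
    (P : Type) [AddCommGroup P] [Module A P] [Nontrivial P]
    [Module.Finite A P] [Module.Projective A P]
    (hP : ∀ p q : Submodule A P, IsCompl p q → p = ⊥ ∨ q = ⊥) :
    IsSimpleModule A ↥(sSup {p : Submodule A P | IsSimpleModule A ↥p}) := by
  have : IsArtinianRing A := isArtinian_of_tower k inferInstance
  have : Module.Injective A P := Module.Injective.of_finite_of_projective
  simp only [isSimpleModule_iff_isAtom]
  exact isAtom_sSup_setOf_isAtom fun _ _ ↦ Module.Injective.eq_bot_or_eq_bot_of_disjoint hP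
end

section
/- Let R be a commutative Artinian local ring with maximal ideal m, and suppose R is injective as a module over itself. Then the socle of R, which equals the annihilator of m in R, is a simple R-module; equivalently, the annihilator of m is a one-dimensional vector space over the residue field R/m. -/
/-!
STATEMENT 6: If a commutative Artinian local ring `R` with maximal ideal `m`
is injective as a module over itself, then the socle of `R`, which equals the
annihilator of `m` in `R`, is a simple `R`-module.
-/

theorem socle_simple_of_selfInjective_artinian_local
    {R : Type} [CommRing R] [IsArtinianRing R] [IsLocalRing R]
    (hR : Module.Injective R R) :
    IsSimpleModule R ↥((IsLocalRing.maximalIdeal R).annihilator) := by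
  classical
  set m := IsLocalRing.maximalIdeal R with hm
  set S := m.annihilator with hS
  have baer : Module.Baer R R := Module.Baer.of_injective hR
  -- Key step: any element of S lies in the span of any nonzero element of S.
  have key : ∀ x ∈ S, x ≠ 0 → ∀ y ∈ S, y ∈ Ideal.span {x} := by
    intro x hxS hx y hyS
    set f₁ := LinearMap.toSpanSingleton R R x with hf₁
    set f₂ := LinearMap.toSpanSingleton R R y with hf₂
    have hker : LinearMap.ker f₁ ≤ LinearMap.ker f₂ := by
      intro r hr
      have hrx : r • x = 0 := hr
      have hrm : r ∈ m := by
        rw [hm, IsLocalRing.mem_maximalIdeal]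
        intro hu
        rcases hu with ⟨u, rfl⟩
        apply hx
        have hux : (u : R) * x = 0 := by rw [← smul_eq_mul]; exact hrx
        calc x = ↑u⁻¹ * ((u : R) * x) := by rw [← mul_assoc]; simp
          _ = 0 := by rw [hux, mul_zero]
      have : y • r = 0 := Submodule.mem_annihilator.mp hyS r hrm
      show r • y = 0
      rwa [smul_eq_mul, mul_comm, ← smul_eq_mul]
    have hxspan : x ∈ Ideal.span {x} := Ideal.mem_span_singleton_self x
    have hrange : (Ideal.span {x} : Submodule R R) = LinearMap.range f₁ :=
      LinearMap.span_singleton_eq_range R R x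
    -- the well-defined map span{x} → R, r•x ↦ r•y
    let g : ↥(Ideal.span ({x} : Set R)) →ₗ[R] R :=
      (Submodule.liftQ (LinearMap.ker f₁) f₂ hker) ∘ₗ
        (f₁.quotKerEquivRange.symm.toLinearMap) ∘ₗ
        (LinearEquiv.ofEq _ _ hrange).toLinearMap
    obtain ⟨h, hh⟩ := baer (Ideal.span {x}) g
    have hsymm : f₁.quotKerEquivRange.symm ⟨x, hrange ▸ hxspan⟩ =
        Submodule.Quotient.mk (1 : R) := by
      rw [LinearEquiv.symm_apply_eq]
      ext
      erw [LinearMap.quotKerEquivRange_apply_mk]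
      simp [f₁]
    have hgx : g ⟨x, hxspan⟩ = y := by
      show Submodule.liftQ (LinearMap.ker f₁) f₂ hker
        (f₁.quotKerEquivRange.symm ((LinearEquiv.ofEq _ _ hrange) ⟨x, hxspan⟩)) = y
      have : (LinearEquiv.ofEq _ _ hrange) ⟨x, hxspan⟩ = ⟨x, hrange ▸ hxspan⟩ := rfl
      rw [this, hsymm, Submodule.liftQ_apply]
      simp [f₂]
    have hyx : y = h x := by rw [hh x hxspan, hgx]
    rw [Ideal.mem_span_singleton']
    refine ⟨h 1, ?_⟩
    have : h x = x • h 1 := by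
      conv_lhs => rw [show x = x • (1 : R) by simp]
      rw [map_smul]
    rw [hyx, this, smul_eq_mul, mul_comm]
  -- S is nonzero
  have hSne : S ≠ ⊥ := by
    obtain ⟨n, hn⟩ := IsArtinianRing.isNilpotent_jacobson_bot (R := R)
    rw [IsLocalRing.jacobson_eq_maximalIdeal (⊥ : Ideal R) bot_ne_top] at hn
    have hex : ∃ k, m ^ k = ⊥ := ⟨n, by rw [← Ideal.zero_eq_bot]; exact hn⟩
    let k := Nat.find hex
    have hk : m ^ k = ⊥ := Nat.find_spec hex
    have hk0 : k ≠ 0 := by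
      intro h0
      rw [h0, pow_zero, Ideal.one_eq_top] at hk
      exact top_ne_bot hk
    have hkm : m ^ (k - 1) ≠ ⊥ := Nat.find_min hex (Nat.sub_lt (Nat.pos_of_ne_zero hk0) one_pos)
    obtain ⟨x, hxmem, hx⟩ := Submodule.exists_mem_ne_zero_of_ne_bot hkm
    intro hbot
    apply hx
    have hxS : x ∈ S := by
      rw [hS]
      rw [Submodule.mem_annihilator]
      intro a ha
      have : x * a ∈ m ^ (k - 1) * m := Ideal.mul_mem_mul hxmem ha
      rw [← pow_succ, Nat.sub_add_cancel (Nat.one_le_iff_ne_zero.mpr hk0), hk] at this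
      simpa using this
    rw [hbot] at hxS
    simpa using hxS
  -- conclude: S is an atom
  rw [isSimpleModule_iff_isAtom]
  constructor
  · exact hSne
  · intro b hb
    by_contra hbne
    obtain ⟨x, hxb, hx⟩ := Submodule.exists_mem_ne_zero_of_ne_bot hbne
    have hxS : x ∈ S := hb.le hxb
    have : S ≤ b := by
      intro y hyS
      have := key x hxS hx y hyS
      have hspan : Ideal.span {x} ≤ b := by
        rw [Ideal.span_le, Set.singleton_subset_iff]; exact hxb
      exact hspan this
    exact absurd (le_antisymm hb.le this) (ne_of_lt hb)
end

section
/- Let R₂ = F₂[h,k,s]/(h², k², s², hs, ks) be the quotient of the polynomial ring in three variables over the field F₂ with two elements by the ideal generated by h², k², s², hs, and ks. Then R₂ is a local ring with maximal ideal m generated by the images of h, k, s, and the annihilator of m in R₂ equals the F₂-linear span of the images of s and hk; in particular the socle of R₂ is two-dimensional over F₂. -/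
/-!
A polynomial vanishes in `R₂` exactly when its coefficients at the standard monomials
`1, h, k, s, hk` of the monomial ideal `I₂` vanish. The ideal `m = (h, k, s)` is the image of the
maximal ideal of the variables and is generated by square-zero elements, so it is the only maximal
ideal. If `p̄` kills `h` and `k`, then the coefficients of `p` at `1, h, k` reappear as coefficients
of `ph` and `pk` at the standard monomials `h` and `hk`, hence vanish, and `p̄` is a combination of
`s` and `hk`.
-/

open MvPolynomial

/-- The ideal `(h², k², s², hs, ks)` in `F₂[h,k,s]`. -/
noncomputable abbrev I₂ : Ideal (MvPolynomial (Fin 3) (ZMod 2)) :=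
  Ideal.span {X 0 ^ 2, X 1 ^ 2, X 2 ^ 2, X 0 * X 2, X 1 * X 2}

/-- The ring `R₂ = F₂[h,k,s]/(h², k², s², hs, ks)`. -/
abbrev R₂ : Type := MvPolynomial (Fin 3) (ZMod 2) ⧸ I₂

/-- The image of `h` in `R₂`. -/
noncomputable abbrev h₂ : R₂ := Ideal.Quotient.mk I₂ (X 0)

/-- The image of `k` in `R₂`. -/
noncomputable abbrev k₂ : R₂ := Ideal.Quotient.mk I₂ (X 1)

/-- The image of `s` in `R₂`. -/
noncomputable abbrev s₂ : R₂ := Ideal.Quotient.mk I₂ (X 2)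

theorem IsLocalRing.of_isMaximal_of_le_nilradical {R : Type*} [CommSemiring R] (m : Ideal R)
    [hm : m.IsMaximal] (hnil : m ≤ nilradical R) : IsLocalRing R :=
  .of_unique_max_ideal ⟨m, hm, fun n hn =>
    (hm.eq_of_le hn.ne_top (hnil.trans (nilradical_le_prime n (H := hn.isPrime)))).symm⟩

theorem Ideal.mem_annihilator_span_iff {R : Type*} [CommSemiring R] {s : Set R} {x : R} :
    x ∈ (Ideal.span s).annihilator ↔ ∀ y ∈ s, x * y = 0 := by
  simp [← Ideal.submodule_span_eq, Submodule.mem_annihilator_span]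

namespace MvPolynomial

variable {σ R : Type*}

theorem mem_ideal_span_monomial_image_iff_coeff [CommSemiring R] {x : MvPolynomial σ R}
    {s : Set (σ →₀ ℕ)} :
    x ∈ Ideal.span ((fun s => monomial s (1 : R)) '' s) ↔
      ∀ m, (∀ si ∈ s, ¬ si ≤ m) → coeff m x = 0 := by
  simp only [mem_ideal_span_monomial_image, mem_support_iff, not_imp_comm (a := coeff _ x = 0)]
  simp

theorem ker_constantCoeff [CommSemiring R] :
    RingHom.ker (constantCoeff : MvPolynomial σ R →+* R) = idealOfVars σ R := by
  ext p
  rw [RingHom.mem_ker, ← pow_one (idealOfVars σ R), mem_pow_idealOfVars_iff']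
  simp [constantCoeff_eq, Finsupp.degree_eq_zero_iff]

instance isMaximal_idealOfVars [Field R] : (idealOfVars σ R).IsMaximal :=
  ker_constantCoeff (σ := σ) (R := R) ▸
    RingHom.ker_isMaximal_of_surjective _ fun r => ⟨C r, constantCoeff_C σ r⟩

end MvPolynomial

section R₂

open Finsupp

def I₂Exponents : Set (Fin 3 →₀ ℕ) :=
  {single 0 2, single 1 2, single 2 2, single 0 1 + single 2 1, single 1 1 + single 2 1}

theorem I₂_eq_span_monomial :
    I₂ = Ideal.span ((fun s => monomial s (1 : ZMod 2)) '' I₂Exponents) := by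
  simp only [I₂, I₂Exponents, Set.image_insert_eq, Set.image_singleton, X_pow_eq_monomial]
  simp only [X, monomial_mul, mul_one]

theorem forall_I₂Exponents_not_le_iff (m : Fin 3 →₀ ℕ) :
    (∀ si ∈ I₂Exponents, ¬ si ≤ m) ↔
      m = 0 ∨ m = single 0 1 ∨ m = single 1 1 ∨ m = single 2 1 ∨ m = single 0 1 + single 1 1 := by
  simp only [I₂Exponents, Set.mem_insert_iff, Set.mem_singleton_iff, forall_eq_or_imp, forall_eq]
  simp only [le_def, Finsupp.ext_iff, Fin.forall_fin_succ, Fin.isValue, Fin.succ_zero_eq_one,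
    Fin.succ_one_eq_two, IsEmpty.forall_iff, and_true, Finsupp.add_apply, Finsupp.coe_zero,
    Pi.zero_apply, single_apply, Fin.reduceEq, if_true, if_false]
  omega

theorem mk_I₂_eq_zero_iff (p : MvPolynomial (Fin 3) (ZMod 2)) :
    Ideal.Quotient.mk I₂ p = 0 ↔ coeff 0 p = 0 ∧ coeff (single 0 1) p = 0 ∧
      coeff (single 1 1) p = 0 ∧ coeff (single 2 1) p = 0 ∧
      coeff (single 0 1 + single 1 1) p = 0 := by
  rw [Ideal.Quotient.eq_zero_iff_mem, I₂_eq_span_monomial, mem_ideal_span_monomial_image_iff_coeff]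
  simp only [forall_I₂Exponents_not_le_iff, or_imp, forall_and, forall_eq]

theorem smul_s₂_add_smul_h₂_mul_k₂ (a b : ZMod 2) :
    a • s₂ + b • (h₂ * k₂) = Ideal.Quotient.mk I₂
      (monomial (single 2 1) a + monomial (single 0 1 + single 1 1) b) := by
  have mk_smul (c : ZMod 2) (p : MvPolynomial (Fin 3) (ZMod 2)) :
      c • Ideal.Quotient.mk I₂ p = Ideal.Quotient.mk I₂ (c • p) :=
    (map_smul (Ideal.Quotient.mkₐ (ZMod 2) I₂) c p).symm
  simp only [← map_mul, mk_smul, ← map_add]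
  simp [X, monomial_mul, smul_monomial]

theorem defining_relations_R₂ :
    h₂ ^ 2 = 0 ∧ k₂ ^ 2 = 0 ∧ s₂ ^ 2 = 0 ∧ h₂ * s₂ = 0 ∧ k₂ * s₂ = 0 := by
  simp only [← map_pow, ← map_mul, Ideal.Quotient.eq_zero_iff_mem]
  refine ⟨?_, ?_, ?_, ?_, ?_⟩ <;> exact Ideal.subset_span (by simp)

theorem I₂_le_idealOfVars : I₂ ≤ idealOfVars (Fin 3) (ZMod 2) := by
  rw [← ker_constantCoeff, Ideal.span_le]
  simp [Set.insert_subset_iff]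

theorem span_h₂_k₂_s₂_eq_map_idealOfVars :
    Ideal.span {h₂, k₂, s₂} = (idealOfVars (Fin 3) (ZMod 2)).map (Ideal.Quotient.mk I₂) := by
  rw [Ideal.map_span, ← Set.range_comp]
  congr
  ext
  simp [Fin.exists_fin_succ, eq_comm]

instance isMaximal_span_h₂_k₂_s₂ : (Ideal.span {h₂, k₂, s₂}).IsMaximal :=
  span_h₂_k₂_s₂_eq_map_idealOfVars ▸ .map_of_surjective_of_ker_le Ideal.Quotient.mk_surjective
    ((Ideal.mk_ker (I := I₂)).trans_le I₂_le_idealOfVars)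

theorem span_h₂_k₂_s₂_le_nilradical : Ideal.span {h₂, k₂, s₂} ≤ nilradical R₂ := by
  obtain ⟨hh, hk, hs, -, -⟩ := defining_relations_R₂
  rw [Ideal.span_le]
  simp only [Set.insert_subset_iff, Set.singleton_subset_iff, SetLike.mem_coe, mem_nilradical]
  exact ⟨⟨2, hh⟩, ⟨2, hk⟩, ⟨2, hs⟩⟩

theorem coeff_eq_zero_of_mk_mem_annihilator {p : MvPolynomial (Fin 3) (ZMod 2)}
    (hp : Ideal.Quotient.mk I₂ p ∈ (Ideal.span {h₂, k₂, s₂}).annihilator) :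
    coeff 0 p = 0 ∧ coeff (single 0 1) p = 0 ∧ coeff (single 1 1) p = 0 := by
  simp only [Ideal.mem_annihilator_span_iff, Set.mem_insert_iff, Set.mem_singleton_iff,
    forall_eq_or_imp, forall_eq, ← map_mul, mk_I₂_eq_zero_iff] at hp
  obtain ⟨⟨-, hh, -, -, hhk⟩, ⟨-, -, -, -, hkh⟩, -⟩ := hp
  rw [← zero_add (single 0 1), coeff_mul_X] at hh
  rw [add_comm, coeff_mul_X] at hhk
  rw [coeff_mul_X] at hkh
  exact ⟨hh, hkh, hhk⟩

theorem annihilator_span_h₂_k₂_s₂ :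
    (Ideal.span {h₂, k₂, s₂} : Ideal R₂).annihilator.restrictScalars (ZMod 2) =
      Submodule.span (ZMod 2) {s₂, h₂ * k₂} := by
  obtain ⟨hh, hk, hs, hhs, hks⟩ := defining_relations_R₂
  apply le_antisymm
  · intro x hx
    obtain ⟨p, rfl⟩ := Ideal.Quotient.mk_surjective x
    obtain ⟨h0, h1, h2⟩ := coeff_eq_zero_of_mk_mem_annihilator hx
    have hp : Ideal.Quotient.mk I₂ p =
        coeff (single 2 1) p • s₂ + coeff (single 0 1 + single 1 1) p • (h₂ * k₂) := by
      rw [smul_s₂_add_smul_h₂_mul_k₂, ← sub_eq_zero, ← map_sub, mk_I₂_eq_zero_iff]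
      simp [coeff_monomial, Finsupp.ext_iff, Fin.forall_fin_succ, h0, h1, h2]
    rw [hp]
    exact add_mem (Submodule.smul_mem _ _ (Submodule.subset_span (by simp)))
      (Submodule.smul_mem _ _ (Submodule.subset_span (by simp)))
  · rw [Submodule.span_le, Set.insert_subset_iff, Set.singleton_subset_iff]
    simp only [SetLike.mem_coe, Submodule.restrictScalars_mem, Ideal.mem_annihilator_span_iff,
      Set.mem_insert_iff, Set.mem_singleton_iff, forall_eq_or_imp, forall_eq]
    exact ⟨⟨by linear_combination hhs, by linear_combination hks, by linear_combination hs⟩,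
      by linear_combination k₂ * hh, by linear_combination h₂ * hk, by linear_combination h₂ * hks⟩

theorem linearIndependent_s₂_h₂_mul_k₂ : LinearIndependent (ZMod 2) ![s₂, h₂ * k₂] := by
  refine LinearIndependent.pair_iff.mpr fun a b hab => ?_
  rw [smul_s₂_add_smul_h₂_mul_k₂, mk_I₂_eq_zero_iff] at hab
  obtain ⟨-, -, -, ha, hb⟩ := hab
  simp_all [coeff_monomial, Finsupp.ext_iff, Fin.forall_fin_succ]

theorem finrank_span_s₂_h₂_mul_k₂ :
    Module.finrank (ZMod 2) (Submodule.span (ZMod 2) {s₂, h₂ * k₂}) = 2 := by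
  rw [← Matrix.range_cons_cons_empty, finrank_span_eq_card linearIndependent_s₂_h₂_mul_k₂,
    Fintype.card_fin]

end R₂

set_option synthInstance.maxHeartbeats 1000000 in
theorem socle_of_mod2_burnside_klein :
    IsLocalRing R₂ ∧
    (∀ (inst : IsLocalRing R₂),
      @IsLocalRing.maximalIdeal R₂ _ inst = Ideal.span {h₂, k₂, s₂}) ∧
    Submodule.restrictScalars (ZMod 2)
        ((Ideal.span {h₂, k₂, s₂} : Ideal R₂).annihilator) =
      Submodule.span (ZMod 2) {s₂, h₂ * k₂} ∧
    Module.finrank (ZMod 2)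
      ↥(Submodule.restrictScalars (ZMod 2)
        ((Ideal.span {h₂, k₂, s₂} : Ideal R₂).annihilator)) = 2 := by
  refine ⟨.of_isMaximal_of_le_nilradical _ span_h₂_k₂_s₂_le_nilradical,
    fun _ => (IsLocalRing.eq_maximalIdeal isMaximal_span_h₂_k₂_s₂).symm,
    annihilator_span_h₂_k₂_s₂, ?_⟩
  rw [annihilator_span_h₂_k₂_s₂]
  exact finrank_span_s₂_h₂_mul_k₂
end

section
/- The ring R₂ = F₂[h,k,s]/(h², k², s², hs, ks), the quotient of the polynomial ring in three variables over the field F₂ with two elements by the ideal generated by h², k², s², hs, and ks, is not self-injective: R₂ is not injective as a module over itself. -/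
/-!
If `R` is self-injective and every `x` with `x * a = 0` also satisfies `x * b = 0`, then the
map `R ⧸ ann a ≅ R a → R`, `x a ↦ x b`, extends to an endomorphism `g` of `R`, whence
`b = a * g 1`. In `R₂` the annihilator of `h` lies in the maximal ideal, which kills `s`;
yet `s` is not a multiple of `h`. Both facts are read off from evaluations into the dual numbers
`F₂[ε]` sending one variable to `ε` and the others to `0`: for `h ↦ ε`, `x h = 0` forces the
constant term of `x` to vanish, and `s ↦ ε` maps every multiple of `h` to `0`.
-/

open MvPolynomial

theorem dvd_of_mul_eq_zero_imp_mul_eq_zero {R : Type*} [Ring R] [Module.Injective R R]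
    {a b : R} (hab : ∀ x : R, x * a = 0 → x * b = 0) : a ∣ b := by
  let μa := LinearMap.toSpanSingleton R R a
  let μb := LinearMap.toSpanSingleton R R b
  have hker : LinearMap.ker μa ≤ LinearMap.ker μb := hab
  obtain ⟨g, hg⟩ := Module.Injective.out (μa.ker.liftQ μa le_rfl)
    (by rw [← LinearMap.ker_eq_bot, Submodule.ker_liftQ_eq_bot _ _ _ le_rfl])
    (μa.ker.liftQ μb hker)
  have hga : g a = b := by
    simpa [μa, μb] using hg (Submodule.Quotient.mk 1)
  exact ⟨g 1, by simpa [hga] using g.map_smul a 1⟩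

namespace R₂

noncomputable abbrev h : R₂ := Ideal.Quotient.mk I₂ (X 0)

noncomputable abbrev s : R₂ := Ideal.Quotient.mk I₂ (X 2)

noncomputable def evalEps (i : Fin 3) :
    MvPolynomial (Fin 3) (ZMod 2) →ₐ[ZMod 2] DualNumber (ZMod 2) :=
  aeval (Pi.single i DualNumber.eps)

theorem I₂_le_ker_evalEps (i : Fin 3) : I₂ ≤ RingHom.ker (evalEps i) := by
  rw [Ideal.span_le]
  rintro q (rfl | rfl | rfl | rfl | rfl) <;>
    fin_cases i <;> simp [evalEps, sq, DualNumber.eps_mul_eps]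

theorem fst_evalEps (i : Fin 3) (p : MvPolynomial (Fin 3) (ZMod 2)) :
    (evalEps i p).fst = constantCoeff p := by
  have := congrArg (· p) (comp_aeval (R := ZMod 2)
    (TrivSqZeroExt.fstHom (ZMod 2) (ZMod 2) (ZMod 2)) (f := Pi.single i DualNumber.eps))
  simpa [evalEps, Pi.single_apply, apply_ite TrivSqZeroExt.fst] using this

theorem constantCoeff_eq_zero_of_mul_X_mem_I₂ {p : MvPolynomial (Fin 3) (ZMod 2)} (i : Fin 3)
    (hp : p * X i ∈ I₂) : constantCoeff p = 0 := by
  have hsnd := congrArg TrivSqZeroExt.snd (I₂_le_ker_evalEps i hp)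
  rw [map_mul, DualNumber.snd_mul, fst_evalEps] at hsnd
  simpa [evalEps] using hsnd

theorem mul_X_two_mem_I₂ {p : MvPolynomial (Fin 3) (ZMod 2)} (hp : constantCoeff p = 0) :
    p * X 2 ∈ I₂ := by
  have hp' : p ∈ Ideal.span (X '' Set.univ) := by
    refine mem_ideal_span_X_image.2 fun m hm => ?_
    have hm0 : m ≠ 0 := by
      rintro rfl
      exact mem_support_iff.1 hm (by rwa [constantCoeff_eq] at hp)
    obtain ⟨i, hi⟩ := Finsupp.ne_iff.1 hm0
    exact ⟨i, Set.mem_univ i, hi⟩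
  have hle : Ideal.span (X '' Set.univ) ≤ I₂.colon {X 2} := by
    rw [Ideal.span_le]
    rintro _ ⟨i, -, rfl⟩
    rw [SetLike.mem_coe, Submodule.mem_colon_singleton, smul_eq_mul]
    fin_cases i <;> exact Ideal.subset_span (by simp [sq])
  simpa using hle hp'

theorem mul_s_eq_zero_of_mul_h_eq_zero (x : R₂) (hx : x * h = 0) : x * s = 0 := by
  obtain ⟨p, rfl⟩ := Ideal.Quotient.mk_surjective x
  rw [← map_mul, Ideal.Quotient.eq_zero_iff_mem] at hx ⊢
  exact mul_X_two_mem_I₂ (constantCoeff_eq_zero_of_mul_X_mem_I₂ 0 hx)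

theorem not_h_dvd_s : ¬ h ∣ s := by
  rintro ⟨c, hc⟩
  obtain ⟨q, rfl⟩ := Ideal.Quotient.mk_surjective c
  rw [← map_mul, Ideal.Quotient.eq] at hc
  have hsnd := congrArg TrivSqZeroExt.snd (I₂_le_ker_evalEps 2 hc)
  simp [evalEps] at hsnd

end R₂

set_option synthInstance.maxHeartbeats 1000000 in
theorem mod2_burnside_klein_not_selfInjective : ¬ Module.Injective R₂ R₂ := fun _ =>
  R₂.not_h_dvd_s (dvd_of_mul_eq_zero_imp_mul_eq_zero R₂.mul_s_eq_zero_of_mul_h_eq_zero)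
end

section
/- The ring B = ℤ[g,h]/(g² − 4g, h² − 2h, gh − 2g) is a free ℤ-module of rank 3, with basis given by the images of 1, g, and h. -/
/-
The relations make the `ℤ`-span of `1, g, h` closed under multiplication, so it is a subalgebra
containing the generators, hence all of `B`. Independence is detected by the marks: each integer
solution `(a, b)` of the relations gives a ring map `B → ℤ` with `g ↦ a`, `h ↦ b`, and the three
solutions `(0, 0)`, `(0, 2)`, `(4, 2)` separate `1, g, h`.
-/

open MvPolynomial

/-- The ideal `(g² − 4g, h² − 2h, gh − 2g)` in `ℤ[g,h]`. -/
noncomputable abbrev IB : Ideal (MvPolynomial (Fin 2) ℤ) :=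
  Ideal.span {X 0 ^ 2 - 4 * X 0, X 1 ^ 2 - 2 * X 1, X 0 * X 1 - 2 * X 0}

/-- The integral Burnside ring presentation `B = ℤ[g,h]/(g² − 4g, h² − 2h, gh − 2g)`. -/
abbrev B : Type := MvPolynomial (Fin 2) ℤ ⧸ IB

open scoped Pointwise in
theorem Submodule.span_eq_top_of_adjoin_eq_top {R A : Type*} [CommSemiring R] [Semiring A]
    [Algebra R A] {s : Set A} (hs : Algebra.adjoin R s = ⊤) (h_one : 1 ∈ span R s)
    (h_mul : s * s ⊆ span R s) : span R s = ⊤ := by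
  have h_span_mul : ∀ x y, x ∈ span R s → y ∈ span R s → x * y ∈ span R s := fun x y hx hy =>
    (span_mul_span R s s).le.trans (span_le.2 h_mul) (mul_mem_mul hx hy)
  have h_adjoin : Algebra.adjoin R s ≤ (span R s).toSubalgebra h_one h_span_mul :=
    Algebra.adjoin_le subset_span
  rw [hs] at h_adjoin
  exact eq_top_iff.2 fun x _ => h_adjoin Algebra.mem_top

theorem MvPolynomial.adjoin_range_mk_X {σ R : Type*} [CommRing R] (I : Ideal (MvPolynomial σ R)) :
    Algebra.adjoin R (Set.range fun i => Ideal.Quotient.mk I (X i)) = ⊤ := by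
  rw [show (Set.range fun i => Ideal.Quotient.mk I (X i)) = Ideal.Quotient.mkₐ R I '' Set.range X
    from Set.range_comp _ _, Algebra.adjoin_image, adjoin_range_X, Algebra.map_top,
    AlgHom.range_eq_top]
  exact Ideal.Quotient.mkₐ_surjective R I

namespace BurnsideC4

noncomputable def g : B := Ideal.Quotient.mk IB (X 0)

noncomputable def h : B := Ideal.Quotient.mk IB (X 1)

theorem mk_eq_zero_of_mem {f : MvPolynomial (Fin 2) ℤ}
    (hf : f ∈ ({X 0 ^ 2 - 4 * X 0, X 1 ^ 2 - 2 * X 1, X 0 * X 1 - 2 * X 0} : Set _)) :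
    Ideal.Quotient.mk IB f = 0 :=
  Ideal.Quotient.eq_zero_iff_mem.2 (Ideal.subset_span hf)

theorem g_mul_g : g * g = (4 : ℤ) • g := by
  have := mk_eq_zero_of_mem (f := X 0 ^ 2 - 4 * X 0) (by simp)
  simp only [map_sub, map_pow, map_mul, map_ofNat] at this
  rw [zsmul_eq_mul, g]
  linear_combination this

theorem h_mul_h : h * h = (2 : ℤ) • h := by
  have := mk_eq_zero_of_mem (f := X 1 ^ 2 - 2 * X 1) (by simp)
  simp only [map_sub, map_pow, map_mul, map_ofNat] at this
  rw [zsmul_eq_mul, h]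
  linear_combination this

theorem g_mul_h : g * h = (2 : ℤ) • g := by
  have := mk_eq_zero_of_mem (f := X 0 * X 1 - 2 * X 0) (by simp)
  simp only [map_sub, map_mul, map_ofNat] at this
  rw [zsmul_eq_mul, g, h]
  linear_combination this

noncomputable def basis : Fin 3 → B := ![1, g, h]

open scoped Pointwise in
theorem mul_subset_span_range_basis :
    Set.range basis * Set.range basis ⊆ Submodule.span ℤ (Set.range basis) := by
  set M := Submodule.span ℤ (Set.range basis)
  have h1 : 1 ∈ M := Submodule.subset_span ⟨0, rfl⟩
  have hg : g ∈ M := Submodule.subset_span ⟨1, rfl⟩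
  have hh : h ∈ M := Submodule.subset_span ⟨2, rfl⟩
  rintro _ ⟨_, ⟨i, rfl⟩, _, ⟨j, rfl⟩, rfl⟩
  fin_cases i <;> fin_cases j <;>
    simp only [basis, Fin.zero_eta, Fin.mk_one, Fin.reduceFinMk, Matrix.cons_val, one_mul,
      mul_one, g_mul_g, h_mul_h, g_mul_h, mul_comm h g] <;>
    first | assumption | exact M.smul_mem _ ‹_›

theorem span_range_basis : Submodule.span ℤ (Set.range basis) = ⊤ := by
  refine Submodule.span_eq_top_of_adjoin_eq_top ?_ (Submodule.subset_span ⟨0, rfl⟩)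
    mul_subset_span_range_basis
  refine eq_top_iff.2 ((adjoin_range_mk_X IB).ge.trans (Algebra.adjoin_mono ?_))
  rintro _ ⟨i, rfl⟩
  fin_cases i
  exacts [⟨1, rfl⟩, ⟨2, rfl⟩]

noncomputable def mark (a b : ℤ) (ha : a ^ 2 = 4 * a) (hb : b ^ 2 = 2 * b) (hab : a * b = 2 * a) :
    B →+* ℤ :=
  Ideal.Quotient.lift IB (eval ![a, b]) fun f hf => by
    refine RingHom.mem_ker.1 (Ideal.span_le.2 ?_ hf)
    simp [Set.insert_subset_iff, ha, hb, hab]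

variable {a b : ℤ} (ha : a ^ 2 = 4 * a) (hb : b ^ 2 = 2 * b) (hab : a * b = 2 * a)

@[simp] theorem mark_g : mark a b ha hb hab g = a := by simp [mark, g]

@[simp] theorem mark_h : mark a b ha hb hab h = b := by simp [mark, h]

theorem linearIndependent_basis : LinearIndependent ℤ basis := by
  refine Fintype.linearIndependent_iff.2 fun c hc => ?_
  have h_mark (a b : ℤ) (ha : a ^ 2 = 4 * a) (hb : b ^ 2 = 2 * b) (hab : a * b = 2 * a) :
      c 0 + c 1 * a + c 2 * b = 0 := by
    simpa [Fin.sum_univ_three, basis] using congrArg (mark a b ha hb hab) hc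
  -- The marks of `C₄` at its subgroups `G`, `H`, `1`: the numbers of points of `G/1` and `G/H`
  -- fixed by each of them.
  have hG := h_mark 0 0 (by norm_num) (by norm_num) (by norm_num)
  have hH := h_mark 0 2 (by norm_num) (by norm_num) (by norm_num)
  have h1 := h_mark 4 2 (by norm_num) (by norm_num) (by norm_num)
  intro i
  fin_cases i <;> simp <;> omega

end BurnsideC4

set_option synthInstance.maxHeartbeats 1000000 in
theorem burnside_C4_free_rank_three :
    ∃ b : Module.Basis (Fin 3) ℤ B,
      b 0 = 1 ∧
      b 1 = Ideal.Quotient.mk IB (X 0) ∧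
      b 2 = Ideal.Quotient.mk IB (X 1) := by
  refine ⟨.mk BurnsideC4.linearIndependent_basis BurnsideC4.span_range_basis.ge, ?_, ?_, ?_⟩ <;>
    exact Module.Basis.mk_apply _ _ _
end
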